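/- Let c₀ ∈ (1,∞) be the unique zero of ψ(t) = (t+1)ln(t+1) + (t−1)ln(t−1) − 2t in (1,∞). Let M > 0 and let r : ℝ → (0,∞) satisfy r(x) ≤ c₀|x| + M for all x ∈ ℝ with |x| > M. Then every lower bounded lower semicontinuous function f : ℝ → (−∞,∞] which is (λ,r)-supermedian is constant. -/

import Mathlib

/-!
Subtracting `inf f` from the truncation `min f (inf f + 1)` gives a real supermedian function
`g ≥ 0` with `inf g = 0`. By the supermedian inequality `{g > 0}` is closed as well as open, so
if `g` is positive somewhere then `g ≥ η > 0` on `[-R, R]`. For `ε > 0` let `μ` be the minimum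
of `g + ε log⁺`. If `μ < η - ε C`, it is attained at some `x` with `d = |x| > R`; integrating
`g ≥ μ - ε log⁺` over `[x - ρ, x + ρ]`, `ρ = r x`, contradicts the supermedian inequality at
`x`. For `ρ ≤ d + 1` this is because `∫_{d-ρ}^{d+ρ} log⁺ < 2ρ log d`. For `ρ > d + 1` the
integral is `2ρ log d + d ψ(ρ/d) + 2`, where `d ψ(ρ/d)` stays bounded because the convex `ψ` is
`≤ 0` on `[1, c₀]` and `ρ ≤ c₀ d + M`; the bound `g ≥ η` on `[-1, 1]` contributes the missing
`2 (η - μ)`. Letting `ε → 0` gives `g ≥ η` everywhere, contradicting `inf g = 0`.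
-/

open Filter MeasureTheory

/-- The interval mean `λ_{x,ρ}(f) = (1/(2ρ)) ∫_{x-ρ}^{x+ρ} f(s) ds` of an
`EReal`-valued function `f` on `ℝ`, computed as the supremum of the means of the
truncations `min (f, n)`. -/
noncomputable def intervalMeanE (f : ℝ → EReal) (x ρ : ℝ) : EReal :=
  ⨆ n : ℕ, (((1 / (2 * ρ)) * ∫ s in (x - ρ)..(x + ρ),
      (f s ⊓ (n : EReal)).toReal : ℝ) : EReal)

noncomputable def psi (t : ℝ) : ℝ :=
  (t + 1) * Real.log (t + 1) + (t - 1) * Real.log (t - 1) - 2 * t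

open Set Real

lemma convexOn_psi : ConvexOn ℝ (Ici 1) psi := by
  have hplus : ConvexOn ℝ (Ici 1) fun t : ℝ => (1 + t) * log (1 + t) :=
    (convexOn_mul_log.translate_right 1).subset (fun t (ht : 1 ≤ t) => by
      simp only [mem_preimage, mem_Ici]; linarith) (convex_Ici 1)
  have hminus : ConvexOn ℝ (Ici 1) fun t : ℝ => (-1 + t) * log (-1 + t) :=
    (convexOn_mul_log.translate_right (-1)).subset (fun t (ht : 1 ≤ t) => by
      simp only [mem_preimage, mem_Ici]; linarith) (convex_Ici 1)
  refine ((hplus.add hminus).sub ((concaveOn_id (convex_Ici (1 : ℝ))).smul zero_le_two)).congr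
    fun t _ => ?_
  simp only [psi, Pi.add_apply, Pi.sub_apply, id, smul_eq_mul]
  ring_nf

lemma psi_one_neg : psi 1 < 0 := by
  have h : psi 1 = 2 * log 2 - 2 := by norm_num [psi]
  linarith [log_two_lt_d9]

lemma psi_nonpos {c₀ t : ℝ} (hc₀1 : 1 ≤ c₀) (hc₀ : psi c₀ = 0) (ht1 : 1 ≤ t) (ht : t ≤ c₀) :
    psi t ≤ 0 := by
  have := convexOn_psi.le_on_segment (mem_Ici.2 le_rfl) (mem_Ici.2 hc₀1)
    (segment_eq_Icc hc₀1 ▸ ⟨ht1, ht⟩ : t ∈ segment ℝ 1 c₀)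
  rw [hc₀, max_eq_right psi_one_neg.le] at this
  exact this

lemma mul_psi_le {c₀ M d t : ℝ} (hc₀1 : 1 ≤ c₀) (hc₀ : psi c₀ = 0) (hM : 0 < M) (hd : 1 ≤ d)
    (ht1 : 1 ≤ t) (ht : d * t ≤ c₀ * d + M) : d * psi t ≤ max (psi (c₀ + M)) 0 := by
  rcases le_or_gt t c₀ with htc | hct
  · exact (mul_nonpos_of_nonneg_of_nonpos (by linarith) (psi_nonpos hc₀1 hc₀ ht1 htc)).trans
      (le_max_right _ _)
  set θ := (t - c₀) / M
  have hθ0 : 0 ≤ θ := div_nonneg (by linarith) hM.le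
  have hdθ : d * θ ≤ 1 := by
    rw [mul_div_assoc', div_le_one hM]; nlinarith
  have hchord : psi t ≤ θ * psi (c₀ + M) := by
    have := convexOn_psi.2 (mem_Ici.2 hc₀1) (mem_Ici.2 (by linarith : (1:ℝ) ≤ c₀ + M))
      (by nlinarith : 0 ≤ 1 - θ) hθ0 (by ring)
    have ht_eq : (1 - θ) * c₀ + θ * (c₀ + M) = t := by
      simp only [θ]; field_simp; ring
    simpa only [smul_eq_mul, hc₀, mul_zero, zero_add, ht_eq] using this
  calc d * psi t ≤ (d * θ) * psi (c₀ + M) := by nlinarith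
    _ ≤ max (psi (c₀ + M)) 0 := by
      rcases le_total 0 (psi (c₀ + M)) with h | h
      · exact (mul_le_of_le_one_left h hdθ).trans (le_max_left _ _)
      · exact (mul_nonpos_of_nonneg_of_nonpos (by positivity) h).trans (le_max_right _ _)

lemma posLog_add_add_posLog_sub_lt {d u : ℝ} (hd : 3 ≤ d) (hu : 0 < u) (hud : u < d + 1) :
    log⁺ (d + u) + log⁺ (d - u) < 2 * log d := by
  have hlog : 2 * log d = log (d ^ 2) := by rw [log_pow]; push_cast; ring
  rw [posLog_eq_log (by rw [abs_of_pos (by linarith)]; linarith), hlog]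
  rcases le_or_gt (d - u) 1 with h | h
  · rw [(posLog_eq_zero_iff _).2 (abs_le.2 ⟨by linarith, h⟩), add_zero]
    exact log_lt_log (by linarith) (by nlinarith)
  · rw [posLog_eq_log (by rw [abs_of_pos (by linarith)]; linarith), ← log_mul (by linarith)
      (by linarith)]
    exact log_lt_log (by nlinarith) (by nlinarith)

lemma integral_posLog_lt {d ρ : ℝ} (hd : 3 ≤ d) (hρ : 0 < ρ) (hρd : ρ ≤ d + 1) :
    ∫ s in (d - ρ)..(d + ρ), log⁺ s < 2 * ρ * log d := by
  set P : ℝ → ℝ := fun y => ∫ s in (0 : ℝ)..y, log⁺ s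
  have hP : ∀ y, HasDerivAt P (log⁺ y) y := fun y =>
    (continuous_posLog.integral_hasStrictDerivAt 0 y).hasDerivAt
  set F : ℝ → ℝ := fun u => 2 * u * log d - (P (d + u) - P (d - u))
  have hF : ∀ u, HasDerivAt F (2 * log d - (log⁺ (d + u) + log⁺ (d - u))) u := by
    intro u
    have hplus := (hP (d + u)).comp u ((hasDerivAt_id u).const_add d)
    have hminus := (hP (d - u)).comp u ((hasDerivAt_id u).const_sub d)
    exact ((((hasDerivAt_id u).const_mul 2).mul_const (log d)).sub
      (hplus.sub hminus)).congr_deriv (by ring)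
  have hmono : StrictMonoOn F (Icc 0 (d + 1)) := by
    refine strictMonoOn_of_deriv_pos (convex_Icc _ _)
      (fun u _ => (hF u).continuousAt.continuousWithinAt) fun u hu => ?_
    rw [interior_Icc] at hu
    rw [(hF u).deriv, sub_pos]
    exact posLog_add_add_posLog_sub_lt hd hu.1 hu.2
  have h := hmono ⟨le_rfl, by linarith⟩ ⟨hρ.le, hρd⟩ hρ
  have hP_sub : ∫ s in (d - ρ)..(d + ρ), log⁺ s = P (d + ρ) - P (d - ρ) :=
    (intervalIntegral.integral_interval_sub_left (continuous_posLog.intervalIntegrable _ _)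
      (continuous_posLog.intervalIntegrable _ _)).symm
  simp only [F, mul_zero, zero_mul, add_zero, sub_zero, sub_self] at h
  linarith

lemma integral_posLog_neg_one_one : ∫ s in (-1 : ℝ)..1, log⁺ s = 0 :=
  intervalIntegral.integral_zero_ae (Eventually.of_forall fun s hs => (posLog_eq_zero_iff s).2
    (abs_le.2 (by rw [uIoc_of_le (by norm_num)] at hs; exact ⟨hs.1.le, hs.2⟩)))

lemma integral_one_posLog {b : ℝ} (hb : 1 ≤ b) :
    ∫ s in (1 : ℝ)..b, log⁺ s = b * log b - b + 1 := by
  rw [intervalIntegral.integral_congr (g := log) fun s hs => posLog_eq_log ?_, integral_log]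
  · simp
  · rw [uIcc_of_le hb] at hs
    exact hs.1.trans (le_abs_self s)

lemma integral_posLog_of_le_of_le {a b : ℝ} (ha : a ≤ -1) (hb : 1 ≤ b) :
    ∫ s in a..b, log⁺ s = (b * log b - b + 1) + (-a * log (-a) + a + 1) := by
  have hi : ∀ x y : ℝ, IntervalIntegrable log⁺ volume x y :=
    fun x y => continuous_posLog.intervalIntegrable x y
  have hleft : ∫ s in a..(-1), log⁺ s = -a * log (-a) + a + 1 := by
    have := intervalIntegral.integral_comp_neg (a := 1) (b := -a) (fun s => log⁺ s)
    simp only [posLog_neg, neg_neg] at this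
    rw [← this, integral_one_posLog (by linarith)]
    ring
  rw [← intervalIntegral.integral_add_adjacent_intervals (hi a (-1)) (hi (-1) b),
    ← intervalIntegral.integral_add_adjacent_intervals (hi (-1) 1) (hi 1 b),
    integral_posLog_neg_one_one, hleft,
    integral_one_posLog hb]
  ring

lemma integral_posLog_eq_psi {d ρ : ℝ} (hd : 0 < d) (hρ : d + 1 ≤ ρ) :
    ∫ s in (d - ρ)..(d + ρ), log⁺ s = 2 * ρ * log d + d * psi (ρ / d) + 2 := by
  have ht : ρ = ρ / d * d := by field_simp
  set t := ρ / d
  have ht1 : 1 < t := by rw [lt_div_iff₀ hd]; linarith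
  rw [integral_posLog_of_le_of_le (by linarith) (by linarith), psi]
  rw [show d + ρ = d * (t + 1) by rw [ht]; ring, show -(d - ρ) = d * (t - 1) by rw [ht]; ring,
    log_mul hd.ne' (by linarith), log_mul hd.ne' (by linarith), ht]
  ring

lemma integral_posLog_le {c₀ M d ρ : ℝ} (hc₀1 : 1 ≤ c₀) (hc₀ : psi c₀ = 0) (hM : 0 < M)
    (hd : 1 ≤ d) (hρ : d + 1 ≤ ρ) (hρM : ρ ≤ c₀ * d + M) :
    ∫ s in (d - ρ)..(d + ρ), log⁺ s ≤ 2 * ρ * log d + 2 + max (psi (c₀ + M)) 0 := by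
  have hd0 : 0 < d := by linarith
  have hpsi := mul_psi_le hc₀1 hc₀ hM hd (t := ρ / d) (by rw [le_div_iff₀ hd0]; linarith)
    (by rw [mul_div_cancel₀ _ hd0.ne']; exact hρM)
  rw [integral_posLog_eq_psi hd0 hρ]
  linarith

lemma integral_posLog_abs (x ρ : ℝ) :
    ∫ s in (|x| - ρ)..(|x| + ρ), log⁺ s = ∫ s in (x - ρ)..(x + ρ), log⁺ s := by
  rcases abs_choice x with h | h
  · rw [h]
  · have := intervalIntegral.integral_comp_neg (a := x - ρ) (b := x + ρ) (fun s => log⁺ s)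
    simp only [posLog_neg] at this
    rw [h, this]
    ring_nf

lemma tendsto_posLog_cocompact : Tendsto log⁺ (cocompact ℝ) atTop :=
  tendsto_atTop_mono
    (fun x => by rw [Function.comp_apply, norm_eq_abs, log_abs]; exact le_max_right _ _)
    (tendsto_log_atTop.comp tendsto_norm_cocompact_atTop)

theorem LowerSemicontinuous.exists_forall_le' {β α : Type*} [TopologicalSpace β] [LinearOrder α]
    {f : β → α} (hf : LowerSemicontinuous f) (x₀ : β) (h : ∀ᶠ x in cocompact β, f x₀ ≤ f x) :
    ∃ x, ∀ y, f x ≤ f y := by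
  obtain ⟨K, hK, hKf⟩ := mem_cocompact.1 h
  obtain ⟨x, -, hx⟩ := (hf.lowerSemicontinuousOn _).exists_isMinOn (insert_nonempty x₀ K)
    (hK.insert x₀)
  refine ⟨x, fun y => ?_⟩
  by_cases hy : y ∈ insert x₀ K
  · exact hx hy
  · exact (hx (mem_insert x₀ K)).trans (hKf fun hyK => hy (mem_insert_of_mem x₀ hyK))

/-- `λ_{x,r(x)}(g) ≤ g(x)` for real-valued `g`, multiplied through by `2 r(x)`. -/
def IsSupermedian (r g : ℝ → ℝ) : Prop :=
  ∀ x, ∫ s in (x - r x)..(x + r x), g s ≤ 2 * r x * g x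

lemma IsSupermedian.sub_const {r g : ℝ → ℝ} (hg : IsSupermedian r g)
    (hint : ∀ a b, IntervalIntegrable g volume a b) (m : ℝ) :
    IsSupermedian r fun s => g s - m := by
  intro x
  rw [intervalIntegral.integral_sub (hint _ _) intervalIntegrable_const,
    intervalIntegral.integral_const, smul_eq_mul]
  linarith [hg x]

lemma IsSupermedian.pos_of_pos {r g : ℝ → ℝ} (hg : IsSupermedian r g) (hr : ∀ x, 0 < r x)
    (hlsc : LowerSemicontinuous g) (h0 : ∀ x, 0 ≤ g x)
    (hint : ∀ a b, IntervalIntegrable g volume a b) {z : ℝ} (hz : 0 < g z) (x : ℝ) :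
    0 < g x := by
  set U := {x | 0 < g x}
  have hU : IsOpen U := lowerSemicontinuous_iff_isOpen_preimage.1 hlsc 0
  suffices hUc : IsOpen Uᶜ from
    (IsClopen.eq_univ ⟨isOpen_compl_iff.1 hUc, hU⟩ ⟨z, hz⟩ ▸ mem_univ x :)
  refine isOpen_iff_mem_nhds.2 fun y (hy : ¬ 0 < g y) => ?_
  have hry := hr y
  -- a nonnegative function with nonpositive mean vanishes a.e., and `U` is open
  have hnull : volume (Function.support g ∩ Ioc (y - r y) (y + r y)) = 0 := by
    have := mt (intervalIntegral.integral_pos_iff_support_of_nonneg_ae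
      (Eventually.of_forall h0) (hint (y - r y) (y + r y))).2
      (not_lt.2 ((hg y).trans (by nlinarith)))
    simpa [show y - r y < y + r y by linarith] using this
  have hempty : U ∩ Ioo (y - r y) (y + r y) = ∅ :=
    (hU.inter isOpen_Ioo).measure_eq_zero_iff volume |>.1 <| measure_mono_null
      (inter_subset_inter (fun s (hs : 0 < g s) => hs.ne') Ioo_subset_Ioc_self) hnull
  exact mem_of_superset (Ioo_mem_nhds (by linarith) (by linarith))
    fun s hs hsU => hempty.subset ⟨hsU, hs⟩

lemma le_integral_of_sub_mul_posLog_le {g : ℝ → ℝ} {a b μ ε : ℝ} (hab : a ≤ b)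
    (hint : IntervalIntegrable g volume a b) (hg : ∀ s, μ - ε * log⁺ s ≤ g s) :
    (b - a) * μ - ε * ∫ s in a..b, log⁺ s ≤ ∫ s in a..b, g s := by
  have hmono := intervalIntegral.integral_mono_on hab
    (intervalIntegrable_const.sub ((continuous_posLog.intervalIntegrable a b).const_mul ε)) hint
    fun s _ => hg s
  rwa [intervalIntegral.integral_sub intervalIntegrable_const
    ((continuous_posLog.intervalIntegrable a b).const_mul ε), intervalIntegral.integral_const,
    intervalIntegral.integral_const_mul, smul_eq_mul] at hmono

lemma le_integral_of_sub_mul_posLog_le_of_le_on_Icc {g : ℝ → ℝ} {a b μ ε η : ℝ} (ha : a ≤ -1)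
    (hb : 1 ≤ b) (hint : ∀ x y, IntervalIntegrable g volume x y)
    (hg : ∀ s, μ - ε * log⁺ s ≤ g s) (hη : ∀ s ∈ Icc (-1 : ℝ) 1, η ≤ g s) :
    (b - a) * μ + 2 * (η - μ) - ε * ∫ s in a..b, log⁺ s ≤ ∫ s in a..b, g s := by
  have hlog : ∀ x y : ℝ, IntervalIntegrable log⁺ volume x y :=
    fun x y => continuous_posLog.intervalIntegrable x y
  have hleft := le_integral_of_sub_mul_posLog_le ha (hint a (-1)) hg
  have hright := le_integral_of_sub_mul_posLog_le hb (hint 1 b) hg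
  have hmid := intervalIntegral.integral_mono_on (by norm_num) intervalIntegrable_const
    (hint (-1) 1) hη
  rw [intervalIntegral.integral_const, smul_eq_mul] at hmid
  rw [← intervalIntegral.integral_add_adjacent_intervals (hint a (-1)) (hint (-1) b),
    ← intervalIntegral.integral_add_adjacent_intervals (hint (-1) 1) (hint 1 b),
    ← intervalIntegral.integral_add_adjacent_intervals (hlog a (-1)) (hlog (-1) b),
    ← intervalIntegral.integral_add_adjacent_intervals (hlog (-1) 1) (hlog 1 b),
    integral_posLog_neg_one_one]
  linarith

theorem IsSupermedian.sub_mul_le_add_mul_posLog {c₀ M : ℝ} {r g : ℝ → ℝ} (hc₀1 : 1 < c₀)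
    (hc₀ : psi c₀ = 0) (hM : 0 < M) (hr : ∀ x : ℝ, M < |x| → r x ≤ c₀ * |x| + M)
    (hg : IsSupermedian r g) (hr_pos : ∀ x, 0 < r x) (hlsc : LowerSemicontinuous g)
    (h0 : ∀ x, 0 ≤ g x) (hint : ∀ a b, IntervalIntegrable g volume a b) {η ε : ℝ}
    (hη : ∀ s ∈ Icc (-max M 3) (max M 3), η ≤ g s) (hε : 0 < ε) (x : ℝ) :
    η - ε * (1 + max (psi (c₀ + M)) 0 / 2) ≤ g x + ε * log⁺ x := by
  set v : ℝ → ℝ := fun s => g s + ε * log⁺ s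
  obtain ⟨xs, hxs⟩ :=
    (hlsc.add (continuous_posLog.const_mul ε).lowerSemicontinuous).exists_forall_le' 0
      (((tendsto_posLog_cocompact.const_mul_atTop hε).eventually_ge_atTop (v 0)).mono
        fun s hs => by linarith [h0 s])
  refine le_trans ?_ (hxs x)
  have hC : 0 < 1 + max (psi (c₀ + M)) 0 / 2 := by positivity
  by_contra! hμ
  have hsub : ∀ s, v xs - ε * log⁺ s ≤ g s := fun s => by linarith [hxs s]
  have hεlog : ∀ s, 0 ≤ ε * log⁺ s := fun s => mul_nonneg hε.le posLog_nonneg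
  have hout : max M 3 < |xs| := by
    by_contra! h
    linarith [hη xs (abs_le.1 h), hεlog xs, mul_pos hε hC]
  set d := |xs|
  set ρ := r xs
  have hd3 : 3 < d := (le_max_right M 3).trans_lt hout
  have hmed : ∫ s in (xs - ρ)..(xs + ρ), g s ≤ 2 * ρ * (v xs - ε * log d) := by
    have hlog : log⁺ xs = log d := (posLog_eq_log (by linarith)).trans (log_abs xs).symm
    simpa [v, hlog] using hg xs
  have hJ := integral_posLog_abs xs ρ
  rcases le_or_gt ρ (d + 1) with hρ | hρ
  · have hlow := le_integral_of_sub_mul_posLog_le (by linarith [hr_pos xs])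
      (hint (xs - ρ) (xs + ρ)) hsub
    have hlt := integral_posLog_lt hd3.le (hr_pos xs) hρ
    rw [hJ] at hlt
    nlinarith [mul_lt_mul_of_pos_left hlt hε]
  · have hlow := le_integral_of_sub_mul_posLog_le_of_le_on_Icc
      (by linarith [le_abs_self xs] : xs - ρ ≤ -1) (by linarith [neg_abs_le xs] : 1 ≤ xs + ρ)
      hint hsub fun s hs =>
        hη s ⟨by linarith [hs.1, le_max_right M 3], by linarith [hs.2, le_max_right M 3]⟩
    have hle := integral_posLog_le hc₀1.le hc₀ hM (by linarith) hρ.le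
      (hr xs ((le_max_left M 3).trans_lt hout))
    rw [hJ] at hle
    have hμ' : v xs < η - ε * (1 + max (psi (c₀ + M)) 0 / 2) := hμ
    nlinarith [mul_le_mul_of_nonneg_left hle hε.le]

theorem IsSupermedian.le_of_le_on_Icc {c₀ M : ℝ} {r g : ℝ → ℝ} (hc₀1 : 1 < c₀)
    (hc₀ : psi c₀ = 0) (hM : 0 < M) (hr : ∀ x : ℝ, M < |x| → r x ≤ c₀ * |x| + M)
    (hg : IsSupermedian r g) (hr_pos : ∀ x, 0 < r x) (hlsc : LowerSemicontinuous g)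
    (h0 : ∀ x, 0 ≤ g x) (hint : ∀ a b, IntervalIntegrable g volume a b) {η : ℝ}
    (hη : ∀ s ∈ Icc (-max M 3) (max M 3), η ≤ g s) (x : ℝ) : η ≤ g x := by
  refine le_of_forall_pos_le_add fun δ hδ => ?_
  have hD : 0 < 1 + max (psi (c₀ + M)) 0 / 2 + log⁺ x :=
    add_pos_of_pos_of_nonneg (by positivity) posLog_nonneg
  have := hg.sub_mul_le_add_mul_posLog hc₀1 hc₀ hM hr hr_pos hlsc h0 hint hη (div_pos hδ hD) x
  have hδ' : δ / (1 + max (psi (c₀ + M)) 0 / 2 + log⁺ x) *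
      (1 + max (psi (c₀ + M)) 0 / 2 + log⁺ x) = δ := div_mul_cancel₀ _ hD.ne'
  linarith

theorem IsSupermedian.exists_pos_le {c₀ M : ℝ} {r g : ℝ → ℝ} (hc₀1 : 1 < c₀)
    (hc₀ : psi c₀ = 0) (hM : 0 < M) (hr : ∀ x : ℝ, M < |x| → r x ≤ c₀ * |x| + M)
    (hg : IsSupermedian r g) (hr_pos : ∀ x, 0 < r x) (hlsc : LowerSemicontinuous g)
    (h0 : ∀ x, 0 ≤ g x) (hint : ∀ a b, IntervalIntegrable g volume a b) {z : ℝ}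
    (hz : 0 < g z) : ∃ η > 0, ∀ x, η ≤ g x := by
  obtain ⟨y, -, hy⟩ := (hlsc.lowerSemicontinuousOn (Icc (-max M 3) (max M 3))).exists_isMinOn
    (nonempty_Icc.2 (by linarith [le_max_right M 3])) isCompact_Icc
  exact ⟨g y, hg.pos_of_pos hr_pos hlsc h0 hint hz y,
    hg.le_of_le_on_Icc hc₀1 hc₀ hM hr hr_pos hlsc h0 hint fun s hs => hy hs⟩

/-- `min (f s) c` as a real number; the junk value `toReal ⊥ = 0` is excluded once `f` is
bounded below. -/
noncomputable def truncToReal (f : ℝ → EReal) (c s : ℝ) : ℝ := (f s ⊓ (c : EReal)).toReal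

section truncToReal

variable {f : ℝ → EReal} {b : ℝ}

lemma coe_truncToReal (hb : ∀ x, (b : EReal) ≤ f x) (c s : ℝ) :
    (truncToReal f c s : EReal) = f s ⊓ c :=
  EReal.coe_toReal (ne_top_of_le_ne_top (EReal.coe_ne_top c) inf_le_right)
    (ne_bot_of_le_ne_bot (EReal.coe_ne_bot (min b c))
      (le_inf ((EReal.coe_le_coe_iff.2 (min_le_left b c)).trans (hb s))
        (EReal.coe_le_coe_iff.2 (min_le_right b c))))

lemma le_truncToReal_iff (hb : ∀ x, (b : EReal) ≤ f x) {y c s : ℝ} :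
    y ≤ truncToReal f c s ↔ (y : EReal) ≤ f s ∧ y ≤ c := by
  rw [← EReal.coe_le_coe_iff, coe_truncToReal hb, le_inf_iff, EReal.coe_le_coe_iff]

lemma lt_truncToReal_iff (hb : ∀ x, (b : EReal) ≤ f x) {y c s : ℝ} :
    y < truncToReal f c s ↔ (y : EReal) < f s ∧ y < c := by
  rw [← EReal.coe_lt_coe_iff, coe_truncToReal hb, lt_inf_iff, EReal.coe_lt_coe_iff]

lemma truncToReal_le (hb : ∀ x, (b : EReal) ≤ f x) (c s : ℝ) : truncToReal f c s ≤ c := by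
  rw [← EReal.coe_le_coe_iff, coe_truncToReal hb]
  exact inf_le_right

lemma truncToReal_mono (hb : ∀ x, (b : EReal) ≤ f x) {c c' : ℝ} (hcc' : c ≤ c') (s : ℝ) :
    truncToReal f c s ≤ truncToReal f c' s := by
  rw [← EReal.coe_le_coe_iff, coe_truncToReal hb, coe_truncToReal hb]
  exact inf_le_inf_left _ (EReal.coe_le_coe_iff.2 hcc')

lemma lowerSemicontinuous_truncToReal (hb : ∀ x, (b : EReal) ≤ f x)
    (hf : LowerSemicontinuous f) (c : ℝ) : LowerSemicontinuous (truncToReal f c) := by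
  refine lowerSemicontinuous_iff_isOpen_preimage.2 fun y => ?_
  have : truncToReal f c ⁻¹' Ioi y = f ⁻¹' Ioi (y : EReal) ∩ {_s | y < c} :=
    ext fun s => lt_truncToReal_iff hb
  rw [this]
  exact (lowerSemicontinuous_iff_isOpen_preimage.1 hf y).inter isOpen_const

lemma intervalIntegrable_truncToReal (hb : ∀ x, (b : EReal) ≤ f x)
    (hf : LowerSemicontinuous f) (c a a' : ℝ) :
    IntervalIntegrable (truncToReal f c) volume a a' :=
  intervalIntegrable_const.mono_fun'
    (lowerSemicontinuous_truncToReal hb hf c).measurable.aestronglyMeasurable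
    (Eventually.of_forall fun s => abs_le_max_abs_abs
      ((le_truncToReal_iff hb).2 ⟨(EReal.coe_le_coe_iff.2 (min_le_left b c)).trans (hb s),
        min_le_right b c⟩) (truncToReal_le hb c s))

lemma isSupermedian_truncToReal (hb : ∀ x, (b : EReal) ≤ f x) (hf : LowerSemicontinuous f)
    {r : ℝ → ℝ} (hr_pos : ∀ x, 0 < r x) (hmed : ∀ x, intervalMeanE f x (r x) ≤ f x) (c : ℝ) :
    IsSupermedian r (truncToReal f c) := by
  intro x
  have hρ := hr_pos x
  rcases le_or_gt (c : EReal) (f x) with hcx | hxc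
  · have hx : truncToReal f c x = c := by
      rw [← EReal.coe_eq_coe_iff, coe_truncToReal hb, inf_eq_right.2 hcx]
    have := intervalIntegral.integral_mono_on (by linarith : x - r x ≤ x + r x)
      (intervalIntegrable_truncToReal hb hf c _ _) intervalIntegrable_const
      fun s _ => truncToReal_le hb c s
    rw [intervalIntegral.integral_const, smul_eq_mul] at this
    rw [hx]
    linarith
  · obtain ⟨n, hn⟩ := exists_nat_ge c
    have hx : (truncToReal f c x : EReal) = f x := by
      rw [coe_truncToReal hb, inf_eq_left.2 hxc.le]
    have hmean : (1 / (2 * r x)) * ∫ s in (x - r x)..(x + r x), truncToReal f n s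
        ≤ truncToReal f c x := by
      rw [← EReal.coe_le_coe_iff, hx]
      exact (le_iSup (fun n : ℕ => (((1 / (2 * r x)) * ∫ s in (x - r x)..(x + r x),
        (f s ⊓ (n : EReal)).toReal : ℝ) : EReal)) n).trans (hmed x)
    rw [one_div, inv_mul_le_iff₀ (by positivity)] at hmean
    exact (intervalIntegral.integral_mono_on (by linarith)
      (intervalIntegrable_truncToReal hb hf c _ _) (intervalIntegrable_truncToReal hb hf n _ _)
      fun s _ => truncToReal_mono hb hn s).trans hmean

end truncToReal

/-- Proposition 1.4.1 (lower bounded version): with `c₀` the unique zero of `ψ` in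
`(1,∞)`, if `r(x) ≤ c₀|x| + M` for `|x| > M`, then every lower bounded lower
semicontinuous `(λ,r)`-supermedian function `f : ℝ → (-∞,∞]` is constant. -/
theorem stmt4 (c₀ M : ℝ) (hc₀1 : 1 < c₀) (hc₀ : psi c₀ = 0) (hM : 0 < M)
    (r : ℝ → ℝ) (hr_pos : ∀ x, 0 < r x)
    (hr : ∀ x : ℝ, M < |x| → r x ≤ c₀ * |x| + M)
    (f : ℝ → EReal) (hf_lsc : LowerSemicontinuous f)
    (hf_lb : ∃ b : ℝ, ∀ x, (b : EReal) ≤ f x)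
    (hf_med : ∀ x : ℝ, intervalMeanE f x (r x) ≤ f x) :
    ∃ C : EReal, ∀ x, f x = C := by
  obtain ⟨b, hb⟩ := hf_lb
  by_cases htop : ⨅ x, f x = ⊤
  · exact ⟨⊤, fun x => top_le_iff.1 (htop ▸ iInf_le f x)⟩
  set m := (⨅ x, f x).toReal
  have hm : (m : EReal) = ⨅ x, f x :=
    EReal.coe_toReal htop (ne_bot_of_le_ne_bot (EReal.coe_ne_bot b) (le_iInf hb))
  have hmf : ∀ x, (m : EReal) ≤ f x := fun x => hm ▸ iInf_le f x
  set g : ℝ → ℝ := fun s => truncToReal f (m + 1) s - m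
  have hg_int : ∀ a a', IntervalIntegrable g volume a a' := fun a a' =>
    (intervalIntegrable_truncToReal hb hf_lsc _ a a').sub intervalIntegrable_const
  have hg_med : IsSupermedian r g :=
    (isSupermedian_truncToReal hb hf_lsc hr_pos hf_med (m + 1)).sub_const
      (intervalIntegrable_truncToReal hb hf_lsc _) m
  have hg_lsc : LowerSemicontinuous g :=
    (continuous_sub_right m).comp_lowerSemicontinuous
      (lowerSemicontinuous_truncToReal hb hf_lsc _) fun _ _ h => sub_le_sub_right h m
  have hg_nonneg : ∀ x, 0 ≤ g x := fun x =>
    sub_nonneg.2 ((le_truncToReal_iff hb).2 ⟨hmf x, by linarith⟩)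
  refine ⟨m, fun z => (hmf z).antisymm' (not_lt.1 fun hz => ?_)⟩
  obtain ⟨η, hη, hηg⟩ := hg_med.exists_pos_le hc₀1 hc₀ hM hr hr_pos hg_lsc hg_nonneg hg_int
    (sub_pos.2 ((lt_truncToReal_iff hb).2 ⟨hz, by linarith⟩))
  have : ((m + η : ℝ) : EReal) ≤ ⨅ x, f x :=
    le_iInf fun x => ((le_truncToReal_iff hb).1 (by linarith [hηg x])).1
  rw [← hm, EReal.coe_le_coe_iff] at this
  linarith
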